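/- For the univariate case: if Z ~ ESN(0, 1, α, τ) with density f(z) = φ(z)Φ(τ√(1+α²)+αz)/Φ(τ), and g(x) = ατ + √(α²+1)·x, then for any function f: ℝ → ℝ such that the integrals exist, E[f(Z)·ζ₁(α₀ + αZ)] = (ζ₁(τ)/√(α²+1))·E[f(g⁻¹(V))], where V ~ N(0,1), α₀ = τ√(1+α²), and ζ₁(x) = φ(x)/Φ(x). -/

import Mathlib

open MeasureTheory Real

noncomputable def phi (x : ℝ) : ℝ := (Real.sqrt (2 * Real.pi))⁻¹ * Real.exp (-x ^ 2 / 2)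

noncomputable def Phi (x : ℝ) : ℝ := ∫ t in Set.Iic x, phi t

noncomputable def zeta1 (x : ℝ) : ℝ := phi x / Phi x

/-- ESN(0,1,α,τ) density -/
noncomputable def esnPdf (α τ z : ℝ) : ℝ :=
  phi z * Phi (τ * Real.sqrt (1 + α ^ 2) + α * z) / Phi τ

/-!
Since `Φ(τ√(1+α²) + αz)` cancels against the denominator of `ζ₁`, the left-hand integrand is
`f z · φ(z) φ(τs + αz) / Φ(τ)` with `s = √(1+α²)`. Completing the square gives
`φ(z) φ(τs + αz) = φ(τ) φ(sz + ατ)`, so it equals `ζ₁(τ) · f z · φ(g z)`, and the affine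
substitution `v = g z = sz + ατ` contributes the Jacobian factor `1/s`.
-/

lemma phi_pos (x : ℝ) : 0 < phi x := by unfold phi; positivity

lemma phi_eq_gaussianPDFReal : phi = ProbabilityTheory.gaussianPDFReal 0 1 := by
  ext x
  simp [phi, ProbabilityTheory.gaussianPDFReal]

lemma integrable_phi : Integrable phi := by
  rw [phi_eq_gaussianPDFReal]
  exact ProbabilityTheory.integrable_gaussianPDFReal 0 1

lemma Phi_pos (x : ℝ) : 0 < Phi x := by
  have h_support : Function.support phi = Set.univ :=
    Function.support_eq_univ fun t => (phi_pos t).ne'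
  rw [Phi, setIntegral_pos_iff_support_of_nonneg_ae
    (Filter.Eventually.of_forall fun t => (phi_pos t).le) integrable_phi.integrableOn,
    h_support, Set.univ_inter]
  simp [Real.volume_Iic]

lemma phi_mul_phi_eq {α s : ℝ} (hs : s ^ 2 = 1 + α ^ 2) (τ z : ℝ) :
    phi z * phi (τ * s + α * z) = phi τ * phi (s * z + α * τ) := by
  unfold phi
  rw [mul_mul_mul_comm, mul_mul_mul_comm _ (Real.exp _), ← Real.exp_add, ← Real.exp_add]
  congr 2
  linear_combination (z ^ 2 - τ ^ 2) / 2 * hs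

lemma zeta1_mul_esnPdf (α τ z : ℝ) :
    zeta1 (τ * √(1 + α ^ 2) + α * z) * esnPdf α τ z =
      zeta1 τ * phi (√(1 + α ^ 2) * z + α * τ) := by
  have hs : √(1 + α ^ 2) ^ 2 = 1 + α ^ 2 := Real.sq_sqrt (by positivity)
  have hΦ := (Phi_pos (τ * √(1 + α ^ 2) + α * z)).ne'
  have hΦτ := (Phi_pos τ).ne'
  rw [zeta1, zeta1, esnPdf, div_mul_eq_mul_div _ _ (phi _), ← phi_mul_phi_eq hs τ z]
  field_simp

lemma integral_comp_mul_add {E : Type*} [NormedAddCommGroup E] [NormedSpace ℝ E]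
    (g : ℝ → E) (a b : ℝ) : ∫ x, g (a * x + b) = |a⁻¹| • ∫ x, g x := by
  rw [← integral_add_right_eq_self g b]
  exact Measure.integral_comp_mul_left (fun x => g (x + b)) a

theorem esn_univariate_factorization_general (α τ : ℝ) (f : ℝ → ℝ) :
    ∫ z : ℝ, f z * zeta1 (τ * Real.sqrt (1 + α ^ 2) + α * z) * esnPdf α τ z =
      (zeta1 τ / Real.sqrt (α ^ 2 + 1)) *
        ∫ v : ℝ, f ((v - α * τ) / Real.sqrt (1 + α ^ 2)) * phi v := by
  set s := √(1 + α ^ 2)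
  have hs : 0 < s := Real.sqrt_pos.mpr (by positivity)
  have h_inv : ∀ z, (s * z + α * τ - α * τ) / s = z := fun z => by field_simp; ring
  calc ∫ z, f z * zeta1 (τ * s + α * z) * esnPdf α τ z
      = zeta1 τ * ∫ z, f ((s * z + α * τ - α * τ) / s) * phi (s * z + α * τ) := by
        rw [← integral_const_mul]
        congr 1 with z
        rw [h_inv, mul_assoc, zeta1_mul_esnPdf]
        ring
    _ = zeta1 τ * (|s⁻¹| * ∫ v, f ((v - α * τ) / s) * phi v) := by
        rw [integral_comp_mul_add (fun v => f ((v - α * τ) / s) * phi v), smul_eq_mul]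
    _ = zeta1 τ / √(α ^ 2 + 1) * ∫ v, f ((v - α * τ) / s) * phi v := by
        rw [abs_of_pos (inv_pos.mpr hs), add_comm (α ^ 2)]
        ring

theorem esn_univariate_factorization (α τ : ℝ) (f : ℝ → ℝ) (hf : Measurable f)
    (hint1 : Integrable (fun z : ℝ =>
      f z * zeta1 (τ * Real.sqrt (1 + α ^ 2) + α * z) * esnPdf α τ z))
    (hint2 : Integrable (fun v : ℝ =>
      f ((v - α * τ) / Real.sqrt (1 + α ^ 2)) * phi v)) :
    ∫ z : ℝ, f z * zeta1 (τ * Real.sqrt (1 + α ^ 2) + α * z) * esnPdf α τ z =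
      (zeta1 τ / Real.sqrt (α ^ 2 + 1)) *
        ∫ v : ℝ, f ((v - α * τ) / Real.sqrt (1 + α ^ 2)) * phi v :=
  esn_univariate_factorization_general α τ f
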